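/- arXiv:2405.15115 — 4 statements merged into one kernel-verified Lean document; each statement's English description precedes it below -/
import Mathlib

section
/- For any matrices A ∈ ℝ^{m×n} and B ∈ ℝ^{n×r}, and conjugate exponents p, q with 1/p + 1/q = 1: ‖AB‖_{p,∞} ≤ ‖A‖_{p,q} ‖B‖_{p,∞}, where ‖M‖_{p,s} = (Σ_j ‖M_{:,j}‖_p^s)^{1/s} is the column-wise mixed norm. -/
/-!
Column `j` of `A * B` is `A *ᵥ b` with `b = B_{:,j}`, i.e. `∑ₖ bₖ A_{:,k}`. The triangle
inequality bounds its `p`-norm by `∑ₖ |bₖ| ‖A_{:,k}‖_p`, and Hölder's inequality in `k` bounds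
this by `‖A‖_{p,q} ‖b‖_p ≤ ‖A‖_{p,q} ‖B‖_{p,∞}`.
-/

open scoped ENNReal

/-- The vector `p`-norm on `ℝⁿ`, for `p ∈ [1, ∞]` (an extended nonnegative real):
`(∑ᵢ |xᵢ|^p)^{1/p}` for finite `p`, and `maxᵢ |xᵢ|` for `p = ∞`. -/
noncomputable def vecPNorm (p : ℝ≥0∞) {n : ℕ} (x : Fin n → ℝ) : ℝ :=
  if p = ∞ then ⨆ i, |x i| else (∑ i, |x i| ^ p.toReal) ^ (1 / p.toReal)

/-- The column-wise mixed `(p,s)`-norm of a matrix: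
`‖M‖_{p,s} = (∑_j ‖M_{:,j}‖_p^s)^{1/s}`, with `s = ∞` giving `max_j ‖M_{:,j}‖_p`. -/
noncomputable def mixedNorm (p s : ℝ≥0∞) {m n : ℕ} (A : Matrix (Fin m) (Fin n) ℝ) : ℝ :=
  vecPNorm s (fun j => vecPNorm p (fun i => A i j))

section vecPNorm

variable {n : ℕ}

lemma vecPNorm_top (x : Fin n → ℝ) : vecPNorm ∞ x = ⨆ i, |x i| := if_pos rfl

lemma vecPNorm_of_ne_top {p : ℝ≥0∞} (hp : p ≠ ∞) (x : Fin n → ℝ) :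
    vecPNorm p x = (∑ i, |x i| ^ p.toReal) ^ (1 / p.toReal) := if_neg hp

lemma vecPNorm_one (x : Fin n → ℝ) : vecPNorm 1 x = ∑ i, |x i| := by
  simp [vecPNorm_of_ne_top ENNReal.one_ne_top]

lemma vecPNorm_nonneg (p : ℝ≥0∞) (x : Fin n → ℝ) : 0 ≤ vecPNorm p x := by
  unfold vecPNorm
  split
  · exact Real.iSup_nonneg fun i => abs_nonneg _
  · positivity

lemma abs_le_vecPNorm_top (x : Fin n → ℝ) (i : Fin n) : |x i| ≤ vecPNorm ∞ x := by
  rw [vecPNorm_top]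
  exact le_ciSup (Set.finite_range fun i => |x i|).bddAbove i

lemma vecPNorm_top_le {x : Fin n → ℝ} {c : ℝ} (hc : 0 ≤ c) (h : ∀ i, |x i| ≤ c) :
    vecPNorm ∞ x ≤ c := by
  rw [vecPNorm_top]
  exact Real.iSup_le h hc

lemma vecPNorm_eq_norm {p : ℝ≥0∞} (hp : p ≠ 0) (x : Fin n → ℝ) :
    vecPNorm p x = ‖WithLp.toLp p x‖ := by
  rcases eq_or_ne p ∞ with rfl | hp_top
  · simp [vecPNorm_top, PiLp.norm_eq_ciSup]
  · rw [vecPNorm_of_ne_top hp_top, PiLp.norm_eq_sum (ENNReal.toReal_pos hp hp_top)]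
    simp

lemma sum_abs_mul_le_vecPNorm_top_mul_vecPNorm_one (x y : Fin n → ℝ) :
    ∑ i, |x i| * |y i| ≤ vecPNorm ∞ x * vecPNorm 1 y := by
  rw [vecPNorm_one, Finset.mul_sum]
  gcongr with i
  exact abs_le_vecPNorm_top x i

lemma sum_abs_mul_le_vecPNorm_mul_vecPNorm (p q : ℝ≥0∞) [p.HolderConjugate q]
    (x y : Fin n → ℝ) : ∑ i, |x i| * |y i| ≤ vecPNorm p x * vecPNorm q y := by
  rcases eq_or_ne p ∞ with rfl | hp
  · obtain rfl : q = 1 := (ENNReal.HolderConjugate.eq_top_iff_eq_one ∞ q).1 rfl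
    exact sum_abs_mul_le_vecPNorm_top_mul_vecPNorm_one x y
  rcases eq_or_ne q ∞ with rfl | hq
  · obtain rfl : p = 1 := (ENNReal.HolderConjugate.eq_top_iff_eq_one ∞ p).1 rfl
    simpa only [mul_comm] using sum_abs_mul_le_vecPNorm_top_mul_vecPNorm_one y x
  rw [vecPNorm_of_ne_top hp, vecPNorm_of_ne_top hq]
  exact Real.inner_le_Lp_mul_Lq_of_nonneg _ (ENNReal.HolderConjugate.toReal_of_ne_top hp hq)
    (fun i _ => abs_nonneg (x i)) (fun i _ => abs_nonneg (y i))

end vecPNorm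

section mixedNorm

variable {m n : ℕ}

lemma mixedNorm_nonneg (p s : ℝ≥0∞) (A : Matrix (Fin m) (Fin n) ℝ) : 0 ≤ mixedNorm p s A :=
  vecPNorm_nonneg _ _

lemma vecPNorm_col_le_mixedNorm_top (p : ℝ≥0∞) (A : Matrix (Fin m) (Fin n) ℝ) (j : Fin n) :
    vecPNorm p (fun i => A i j) ≤ mixedNorm p ∞ A := by
  simpa only [mixedNorm, abs_of_nonneg (vecPNorm_nonneg _ _)] using
    abs_le_vecPNorm_top (fun j => vecPNorm p (fun i => A i j)) j

lemma vecPNorm_mulVec_le_sum (p : ℝ≥0∞) [Fact (1 ≤ p)] (A : Matrix (Fin m) (Fin n) ℝ)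
    (v : Fin n → ℝ) :
    vecPNorm p (A.mulVec v) ≤ ∑ k, |v k| * vecPNorm p (fun i => A i k) := by
  have hp : p ≠ 0 := (zero_lt_one.trans_le Fact.out).ne'
  have hcols : WithLp.toLp p (A.mulVec v) = ∑ k, v k • WithLp.toLp p (fun i => A i k) := by
    ext i
    simp [Matrix.mulVec, dotProduct, mul_comm]
  simp only [vecPNorm_eq_norm hp, hcols]
  refine (norm_sum_le _ _).trans (Finset.sum_le_sum fun k _ => ?_)
  rw [norm_smul, Real.norm_eq_abs]

lemma vecPNorm_mulVec_le (p q : ℝ≥0∞) [p.HolderConjugate q] (A : Matrix (Fin m) (Fin n) ℝ)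
    (v : Fin n → ℝ) : vecPNorm p (A.mulVec v) ≤ mixedNorm p q A * vecPNorm p v := by
  have : Fact (1 ≤ p) := ⟨ENNReal.HolderConjugate.one_le p q⟩
  calc vecPNorm p (A.mulVec v)
      ≤ ∑ k, |vecPNorm p (fun i => A i k)| * |v k| := by
        simpa only [abs_of_nonneg (vecPNorm_nonneg _ _), mul_comm] using
          vecPNorm_mulVec_le_sum p A v
    _ ≤ mixedNorm p q A * vecPNorm p v :=
        sum_abs_mul_le_vecPNorm_mul_vecPNorm q p _ v

end mixedNorm

theorem mixedNorm_mul_le_general (p q : ℝ≥0∞)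
    (hpq : 1 / p + 1 / q = 1) {m n r : ℕ}
    (A : Matrix (Fin m) (Fin n) ℝ) (B : Matrix (Fin n) (Fin r) ℝ) :
    mixedNorm p ∞ (A * B) ≤ mixedNorm p q A * mixedNorm p ∞ B := by
  have : p.HolderConjugate q := ENNReal.holderConjugate_iff.2 (by simpa only [one_div] using hpq)
  refine vecPNorm_top_le (mul_nonneg (mixedNorm_nonneg _ _ _) (mixedNorm_nonneg _ _ _))
    fun j => ?_
  rw [abs_of_nonneg (vecPNorm_nonneg _ _)]
  calc vecPNorm p (fun i => (A * B) i j)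
      = vecPNorm p (A.mulVec fun k => B k j) := rfl
    _ ≤ mixedNorm p q A * vecPNorm p (fun k => B k j) := vecPNorm_mulVec_le p q A _
    _ ≤ mixedNorm p q A * mixedNorm p ∞ B :=
        mul_le_mul_of_nonneg_left (vecPNorm_col_le_mixedNorm_top p B j) (mixedNorm_nonneg _ _ _)

/-- For any matrices `A ∈ ℝ^{m×n}`, `B ∈ ℝ^{n×r}` and conjugate exponents `p, q` with
`1/p + 1/q = 1`: `‖AB‖_{p,∞} ≤ ‖A‖_{p,q} ‖B‖_{p,∞}`. -/
theorem mixedNorm_mul_le (p q : ℝ≥0∞) (hp : 1 ≤ p) (hq : 1 ≤ q)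
    (hpq : 1 / p + 1 / q = 1) {m n r : ℕ}
    (A : Matrix (Fin m) (Fin n) ℝ) (B : Matrix (Fin n) (Fin r) ℝ) :
    mixedNorm p ∞ (A * B) ≤ mixedNorm p q A * mixedNorm p ∞ B :=
  mixedNorm_mul_le_general p q hpq A B
end

section
/- For any two vectors x, y ∈ ℝ^d, the softmax function satisfies ‖softmax(x) − softmax(y)‖₁ ≤ 2‖x − y‖_∞. -/
/-!
If `|x j - y j| ≤ t` for all `j`, then both the numerator and the normaliser of each softmax
coordinate move by a factor at most `exp t`, so `p = softmax x` and `q = softmax y` satisfy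
`exp (-t) * p i ≤ exp t * q i` and symmetrically. Two numbers whose ratio lies in
`[exp (-2t), exp (2t)]` satisfy `|p - q| ≤ tanh t * (p + q)`; summing over `i` and using
`∑ p, ∑ q ≤ 1` gives `‖p - q‖₁ ≤ 2 tanh t ≤ 2 t`.
-/

/-- The softmax function on `ℝ^d`: `softmax(z)_i = exp(z_i) / ∑_j exp(z_j)`. -/
noncomputable def softmax {d : ℕ} (z : Fin d → ℝ) : Fin d → ℝ :=
  fun i => Real.exp (z i) / ∑ j, Real.exp (z j)

open Real Finset

theorem Real.sinh_le_mul_cosh {x : ℝ} (hx : 0 ≤ x) : sinh x ≤ x * cosh x := by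
  have hmono : MonotoneOn (fun t => t * cosh t - sinh t) (Set.Ici 0) := by
    refine monotoneOn_of_hasDerivWithinAt_nonneg (convex_Ici 0) (by fun_prop)
      (fun t _ => ?_) (fun t ht => ?_) (f' := fun t => t * sinh t)
    · have h := ((hasDerivAt_id t).mul (hasDerivAt_cosh t)).sub (hasDerivAt_sinh t)
      simp only [id, one_mul, add_sub_cancel_left] at h
      exact h.hasDerivWithinAt
    · rw [interior_Ici] at ht
      exact mul_nonneg (le_of_lt ht) (sinh_nonneg_iff.2 (le_of_lt ht))
  simpa using hmono Set.self_mem_Ici hx hx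

theorem Real.tanh_le_self {x : ℝ} (hx : 0 ≤ x) : tanh x ≤ x := by
  rw [tanh_eq_sinh_div_cosh, div_le_iff₀ (cosh_pos x)]
  exact sinh_le_mul_cosh hx

theorem Real.tanh_nonneg {x : ℝ} (hx : 0 ≤ x) : 0 ≤ tanh x := by
  rw [tanh_eq_sinh_div_cosh]
  exact div_nonneg (sinh_nonneg_iff.2 hx) (cosh_pos x).le

theorem abs_sub_le_tanh_mul_add {p q t : ℝ} (hpq : exp (-t) * p ≤ exp t * q)
    (hqp : exp (-t) * q ≤ exp t * p) : |p - q| ≤ tanh t * (p + q) := by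
  rw [tanh_eq_sinh_div_cosh, div_mul_eq_mul_div, le_div_iff₀ (cosh_pos t), sinh_eq, cosh_eq]
  rcases abs_cases (p - q) with ⟨h, -⟩ | ⟨h, -⟩ <;> rw [h] <;> linarith

theorem sum_abs_sub_le_tanh_mul_sum {ι : Type*} [Fintype ι] {p q : ι → ℝ} {t : ℝ}
    (hpq : ∀ i, exp (-t) * p i ≤ exp t * q i) (hqp : ∀ i, exp (-t) * q i ≤ exp t * p i) :
    ∑ i, |p i - q i| ≤ tanh t * ∑ i, (p i + q i) := by
  rw [mul_sum]
  exact sum_le_sum fun i _ => abs_sub_le_tanh_mul_add (hpq i) (hqp i)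

-- Not `= 1`: for `d = 0` the sum is empty.
theorem sum_softmax_le_one {d : ℕ} (z : Fin d → ℝ) : ∑ i, softmax z i ≤ 1 := by
  simp only [softmax, ← sum_div]
  exact div_self_le_one _

theorem sum_exp_le_exp_mul_sum_exp {ι : Type*} [Fintype ι] {x y : ι → ℝ} {t : ℝ}
    (h : ∀ j, y j ≤ x j + t) : ∑ j, exp (y j) ≤ exp t * ∑ j, exp (x j) := by
  rw [mul_sum]
  exact sum_le_sum fun j _ => by rw [← exp_add, add_comm t]; exact exp_le_exp.2 (h j)

theorem exp_neg_mul_softmax_le {d : ℕ} {x y : Fin d → ℝ} {t : ℝ} (h : ∀ j, |x j - y j| ≤ t)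
    (i : Fin d) : exp (-t) * softmax x i ≤ exp t * softmax y i := by
  have hnum : exp (-t) * exp (x i) ≤ exp (y i) := by
    rw [← exp_add]; exact exp_le_exp.2 (by linarith [(abs_le.1 (h i)).2])
  have hden : ∑ j, exp (y j) ≤ exp t * ∑ j, exp (x j) :=
    sum_exp_le_exp_mul_sum_exp fun j => by linarith [(abs_le.1 (h j)).1]
  have hpos : ∀ z : Fin d → ℝ, 0 < ∑ j, exp (z j) := fun z =>
    sum_pos (fun j _ => exp_pos (z j)) ⟨i, mem_univ i⟩
  rw [softmax, softmax, mul_div_assoc', mul_div_assoc', div_le_div_iff₀ (hpos x) (hpos y)]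
  calc exp (-t) * exp (x i) * ∑ j, exp (y j)
      ≤ exp (y i) * (exp t * ∑ j, exp (x j)) :=
        mul_le_mul hnum hden (hpos y).le (exp_pos _).le
    _ = exp t * exp (y i) * ∑ j, exp (x j) := by ring

/-- For any `x, y ∈ ℝ^d`, `‖softmax x − softmax y‖₁ ≤ 2 ‖x − y‖_∞`.
The sup norm `‖x - y‖` is the norm of the pi type `Fin d → ℝ`, i.e. `⊔ᵢ |xᵢ - yᵢ|`. -/
theorem softmax_l1_lipschitz {d : ℕ} (x y : Fin d → ℝ) :
    ∑ i, |softmax x i - softmax y i| ≤ 2 * ‖x - y‖ := by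
  set t := ‖x - y‖
  have hxy : ∀ j, |x j - y j| ≤ t := fun j => by simpa using norm_le_pi_norm (x - y) j
  have hyx : ∀ j, |y j - x j| ≤ t := fun j => abs_sub_comm (y j) (x j) ▸ hxy j
  have ht : 0 ≤ t := norm_nonneg _
  calc ∑ i, |softmax x i - softmax y i|
      ≤ tanh t * ∑ i, (softmax x i + softmax y i) :=
        sum_abs_sub_le_tanh_mul_sum (exp_neg_mul_softmax_le hxy) (exp_neg_mul_softmax_le hyx)
    _ ≤ tanh t * 2 := by
        rw [sum_add_distrib]
        exact mul_le_mul_of_nonneg_left (by linarith [sum_softmax_le_one x, sum_softmax_le_one y])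
          (tanh_nonneg ht)
    _ ≤ 2 * t := by linarith [tanh_le_self ht]
end

section
/- (Donsker–Varadhan variational formula) For probability measures P on a measurable space Θ and a measurable function h: Θ → ℝ with exp(h) P-integrable, log E_P[exp h] = sup over probability measures Q with Q ≪ P of ( E_Q[h] − KL(Q‖P) ). -/
/-!
Write `ν^f` for the tilted measure `e^f ν / ∫ e^f dν`. For `Q ≪ ν` one has
`KL(Q‖ν^f) = KL(Q‖ν) - E_Q[f] + log ∫ e^f dν`, so Gibbs' inequality `KL(Q‖ν^f) ≥ 0` is exactly
the upper bound `E_Q[f] - KL(Q‖ν) ≤ log ∫ e^f dν`, with equality at `Q = ν^f`. The tilted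
measure itself may fail to integrate `f`, so the bound is approached through the truncations
`min f n`: the tilted measures `ν^(min f n)` are admissible and give values at least
`log ∫ e^(min f n) dν`, which tend to `log ∫ e^f dν` by monotone convergence.
-/

open MeasureTheory

/-- The Kullback–Leibler divergence `KL(Q‖P) = ∫ log(dQ/dP) dQ` (as a real number,
via the log-likelihood ratio), for `Q ≪ P`. -/
noncomputable def klDivReal {α : Type*} [MeasurableSpace α] (Q P : Measure α) : ℝ :=
  ∫ x, llr Q P x ∂Q

open Real Filter Topology InformationTheory

section Tilting

variable {α : Type*} [MeasurableSpace α] {μ ν : Measure α} {f g : α → ℝ}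

lemma integral_sub_klDivReal_le_log_integral_exp [IsProbabilityMeasure μ] [SigmaFinite ν]
    (hμν : μ ≪ ν) (hfμ : Integrable f μ) (hfν : Integrable (fun x ↦ exp (f x)) ν)
    (h_llr : Integrable (llr μ ν) μ) :
    ∫ x, f x ∂μ - klDivReal μ ν ≤ log (∫ x, exp (f x) ∂ν) := by
  have : NeZero ν :=
    ⟨fun hν ↦ IsProbabilityMeasure.ne_zero μ (Measure.absolutelyContinuous_zero_iff.mp (hν ▸ hμν))⟩
  have : IsProbabilityMeasure (ν.tilted f) := isProbabilityMeasure_tilted hfν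
  have gibbs := integral_llr_add_sub_measure_univ_nonneg
    (hμν.trans (absolutelyContinuous_tilted hfν)) (integrable_llr_tilted_right hμν hfμ h_llr hfν)
  rw [integral_llr_tilted_right hμν hfμ hfν h_llr] at gibbs
  simp only [probReal_univ] at gibbs
  rw [klDivReal]
  linarith

lemma llr_tilted_self_ae_eq [SigmaFinite ν] (hfν : Integrable (fun x ↦ exp (f x)) ν) :
    llr (ν.tilted f) ν =ᵐ[ν.tilted f] fun x ↦ f x - log (∫ x, exp (f x) ∂ν) :=
  (tilted_absolutelyContinuous ν f).ae_le (log_rnDeriv_tilted_left_self hfν)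

lemma integrable_llr_tilted_self [SigmaFinite ν] (hfν : Integrable (fun x ↦ exp (f x)) ν)
    (hf : Integrable f (ν.tilted f)) : Integrable (llr (ν.tilted f) ν) (ν.tilted f) :=
  (integrable_congr (llr_tilted_self_ae_eq hfν)).mpr (hf.sub (integrable_const _))

lemma integral_sub_klDivReal_tilted_self [SigmaFinite ν] [NeZero ν]
    (hfν : Integrable (fun x ↦ exp (f x)) ν) (hf : Integrable f (ν.tilted f)) :
    ∫ x, f x ∂(ν.tilted f) - klDivReal (ν.tilted f) ν = log (∫ x, exp (f x) ∂ν) := by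
  have : IsProbabilityMeasure (ν.tilted f) := isProbabilityMeasure_tilted hfν
  rw [klDivReal, integral_congr_ae (llr_tilted_self_ae_eq hfν),
    integral_sub hf (integrable_const _)]
  simp

lemma MeasureTheory.Integrable.exp_min_const (hg : Integrable (fun x ↦ exp (g x)) ν) (c : ℝ) :
    Integrable (fun x ↦ exp (min (g x) c)) ν := by
  have hg_meas := aemeasurable_of_aemeasurable_exp hg.1.aemeasurable
  refine hg.mono' (hg_meas.min aemeasurable_const).exp.aestronglyMeasurable
    (ae_of_all _ fun x ↦ ?_)
  rw [norm_of_nonneg (exp_pos _).le]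
  exact exp_le_exp.mpr (min_le_left _ _)

lemma integrable_tilted_of_le [IsFiniteMeasure ν] {c : ℝ}
    (hfν : Integrable (fun x ↦ exp (f x)) ν) (hgν : Integrable (fun x ↦ exp (g x)) ν)
    (hf_le_c : ∀ x, f x ≤ c) (hf_le_g : ∀ x, f x ≤ g x) : Integrable g (ν.tilted f) := by
  rw [integrable_tilted_iff hfν]
  have hg_meas := aemeasurable_of_aemeasurable_exp hgν.1.aemeasurable
  refine ((hgν.const_mul (exp c)).add (integrable_const 1)).mono'
    (hfν.1.smul hg_meas.aestronglyMeasurable) (ae_of_all _ fun x ↦ ?_)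
  have h_abs : |g x| ≤ exp (g x) + exp (-g x) := by
    have := add_one_le_exp (g x)
    have := add_one_le_exp (-g x)
    have := exp_pos (g x)
    have := exp_pos (-g x)
    exact abs_le.mpr ⟨by linarith, by linarith⟩
  rw [norm_smul, norm_of_nonneg (exp_pos _).le, norm_eq_abs]
  calc exp (f x) * |g x| ≤ exp (f x) * (exp (g x) + exp (-g x)) := by gcongr
    _ = exp (f x) * exp (g x) + exp (f x - g x) := by
      rw [mul_add, ← exp_add, ← exp_add, sub_eq_add_neg]
    _ ≤ exp c * exp (g x) + 1 :=
      add_le_add (mul_le_mul_of_nonneg_right (exp_le_exp.mpr (hf_le_c x)) (exp_pos _).le)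
        (exp_le_one_iff.mpr (sub_nonpos.mpr (hf_le_g x)))

lemma exists_log_integral_exp_le_integral_sub_klDivReal [IsFiniteMeasure ν] [NeZero ν] {c : ℝ}
    (hfν : Integrable (fun x ↦ exp (f x)) ν) (hgν : Integrable (fun x ↦ exp (g x)) ν)
    (hf_le_c : ∀ x, f x ≤ c) (hf_le_g : ∀ x, f x ≤ g x) :
    ∃ Q : Measure α, IsProbabilityMeasure Q ∧ Q ≪ ν ∧ Integrable g Q ∧
      Integrable (llr Q ν) Q ∧ log (∫ x, exp (f x) ∂ν) ≤ ∫ x, g x ∂Q - klDivReal Q ν := by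
  have hf := integrable_tilted_of_le hfν hfν hf_le_c fun _ ↦ le_rfl
  have hg := integrable_tilted_of_le hfν hgν hf_le_c hf_le_g
  refine ⟨ν.tilted f, isProbabilityMeasure_tilted hfν, tilted_absolutelyContinuous ν f, hg,
    integrable_llr_tilted_self hfν hf, ?_⟩
  rw [← integral_sub_klDivReal_tilted_self hfν hf]
  linarith [integral_mono hf hg hf_le_g]

lemma tendsto_integral_exp_min_natCast (hg : Integrable (fun x ↦ exp (g x)) ν) :
    Tendsto (fun n : ℕ ↦ ∫ x, exp (min (g x) n) ∂ν) atTop (𝓝 (∫ x, exp (g x) ∂ν)) := by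
  refine integral_tendsto_of_tendsto_of_monotone (fun n ↦ hg.exp_min_const n) hg
    (ae_of_all _ fun x m n hmn ↦ exp_le_exp.mpr (min_le_min_left _ (Nat.cast_le.mpr hmn)))
    (ae_of_all _ fun x ↦ tendsto_const_nhds.congr' ?_)
  filter_upwards [eventually_ge_atTop ⌈g x⌉₊] with n hn
  rw [min_eq_left ((Nat.le_ceil (g x)).trans (Nat.cast_le.mpr hn))]

end Tilting

theorem donsker_varadhan_general {Θ : Type*} [MeasurableSpace Θ] (P : Measure Θ)
    [IsProbabilityMeasure P] (h : Θ → ℝ)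
    (hint : Integrable (fun θ => Real.exp (h θ)) P) :
    IsLUB {z : ℝ | ∃ Q : Measure Θ, IsProbabilityMeasure Q ∧ Q ≪ P ∧
        Integrable h Q ∧ Integrable (llr Q P) Q ∧
        z = ∫ θ, h θ ∂Q - klDivReal Q P}
      (Real.log (∫ θ, Real.exp (h θ) ∂P)) := by
  refine ⟨?_, fun b hb ↦ ?_⟩
  · rintro z ⟨Q, hQ, hQP, hhQ, hllr, rfl⟩
    exact integral_sub_klDivReal_le_log_integral_exp hQP hhQ hint hllr
  · have h_trunc (n : ℕ) : log (∫ θ, exp (min (h θ) n) ∂P) ≤ b := by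
      obtain ⟨Q, hQ, hQP, hhQ, hllr, hle⟩ :=
        exists_log_integral_exp_le_integral_sub_klDivReal (hint.exp_min_const n) hint
          (fun θ ↦ min_le_right _ _) (fun θ ↦ min_le_left _ _)
      exact hle.trans (hb ⟨Q, hQ, hQP, hhQ, hllr, rfl⟩)
    have h_lim := (continuousAt_log (integral_exp_pos hint).ne').tendsto.comp
      (tendsto_integral_exp_min_natCast hint)
    exact le_of_tendsto h_lim (Eventually.of_forall h_trunc)

/-- Donsker–Varadhan variational formula: for a probability measure `P` on `Θ` and a
measurable `h : Θ → ℝ` with `exp h` `P`-integrable,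
`log E_P[exp h]` is the supremum (least upper bound) over probability measures `Q ≪ P`
(for which `E_Q[h]` and `KL(Q‖P)` are well-defined) of `E_Q[h] − KL(Q‖P)`. -/
theorem donsker_varadhan {Θ : Type*} [MeasurableSpace Θ] (P : Measure Θ)
    [IsProbabilityMeasure P] (h : Θ → ℝ) (hmeas : Measurable h)
    (hint : Integrable (fun θ => Real.exp (h θ)) P) :
    IsLUB {z : ℝ | ∃ Q : Measure Θ, IsProbabilityMeasure Q ∧ Q ≪ P ∧
        Integrable h Q ∧ Integrable (llr Q P) Q ∧
        z = ∫ θ, h θ ∂Q - klDivReal Q P}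
      (Real.log (∫ θ, Real.exp (h θ) ∂P)) :=
  donsker_varadhan_general P h hint
end

section
/- (McDiarmid MGF bound for independent variables) Let X = (X₁,…,X_N) be independent random variables with X_i taking values in Λ_i, and let f: Λ₁ × ⋯ × Λ_N → ℝ satisfy f(x) − f(y) ≤ Σᵢ cᵢ·1{xᵢ ≠ yᵢ} for all x, y. Then for any λ ∈ ℝ, E[exp(λ(f(X) − E[f(X)]))] ≤ exp(λ²‖c‖₂²/2). -/
/-!
Induct on the number of coordinates, splitting off the first one. Conditionally on the remaining
coordinates, `f` varies by at most `c₀` in the first one, so by Hoeffding's lemma its fluctuation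
around the conditional mean `F` is sub-Gaussian with variance proxy `c₀²`. The conditional mean
`F` again has bounded differences in the remaining coordinates, so the induction hypothesis
applies to it, and the two mgf bounds multiply by Fubini.
-/

open MeasureTheory ProbabilityTheory
open scoped NNReal

section BoundedDifferences

variable {ι : Type*} [Fintype ι] {Λ : ι → Type*} [∀ i, DecidableEq (Λ i)]

def HasBoundedDifferences (f : (∀ i, Λ i) → ℝ) (c : ι → ℝ≥0) : Prop :=
  ∀ x y, f x - f y ≤ ∑ i, if x i ≠ y i then (c i : ℝ) else 0

variable {f : (∀ i, Λ i) → ℝ} {c : ι → ℝ≥0}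

lemma HasBoundedDifferences.sub_le_sum (hf : HasBoundedDifferences f c) (x y : ∀ i, Λ i) :
    f x - f y ≤ ∑ i, (c i : ℝ) :=
  (hf x y).trans <| Finset.sum_le_sum fun i _ => by split_ifs <;> simp

lemma HasBoundedDifferences.mem_Icc (hf : HasBoundedDifferences f c) (x₀ x : ∀ i, Λ i) :
    f x ∈ Set.Icc (f x₀ - ∑ i, (c i : ℝ)) (f x₀ + ∑ i, (c i : ℝ)) := by
  constructor <;> linarith [hf.sub_le_sum x x₀, hf.sub_le_sum x₀ x]

lemma HasBoundedDifferences.integral {α : Type*} [MeasurableSpace α] {ν : Measure α}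
    [IsProbabilityMeasure ν] {g : α → (∀ i, Λ i) → ℝ}
    (hg : ∀ t, HasBoundedDifferences (g t) c)
    (hint : ∀ y, Integrable (fun t => g t y) ν) :
    HasBoundedDifferences (fun y => ∫ t, g t y ∂ν) c := fun y y' => by
  rw [← integral_sub (hint y) (hint y')]
  simpa using integral_mono ((hint y).sub (hint y')) (integrable_const _) fun t => hg t y y'

end BoundedDifferences

namespace HasBoundedDifferences

variable {n : ℕ} {Λ : Fin (n + 1) → Type*} [∀ i, DecidableEq (Λ i)]
  {f : (∀ i, Λ i) → ℝ} {c : Fin (n + 1) → ℝ≥0}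

lemma insertNth (hf : HasBoundedDifferences f c) (i : Fin (n + 1)) (t : Λ i) :
    HasBoundedDifferences (fun y => f (i.insertNth t y)) (fun j => c (i.succAbove j)) :=
  fun y y' => by simpa [Fin.sum_univ_succAbove _ i] using hf (i.insertNth t y) (i.insertNth t y')

lemma insertNth_sub_insertNth_le (hf : HasBoundedDifferences f c) (i : Fin (n + 1))
    (t t' : Λ i) (y : ∀ j, Λ (i.succAbove j)) :
    f (i.insertNth t y) - f (i.insertNth t' y) ≤ c i := by
  have h := hf (i.insertNth t y) (i.insertNth t' y)
  simp only [Fin.sum_univ_succAbove _ i, Fin.insertNth_apply_same, Fin.insertNth_apply_succAbove,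
    ne_eq, not_true_eq_false, if_false, Finset.sum_const_zero, add_zero] at h
  exact h.trans (by split_ifs <;> simp)

end HasBoundedDifferences

namespace ProbabilityTheory

variable {α β : Type*} [MeasurableSpace α] [MeasurableSpace β]
  {ν : Measure α} {ρ : Measure β} [IsProbabilityMeasure ν] [IsProbabilityMeasure ρ]

/-- Hoeffding's lemma on `[X t₀ - c, X t₀ + c]`, whose length `2c` gives the variance
proxy `c²`. -/
lemma hasSubgaussianMGF_of_sub_le {X : α → ℝ} (hX : Measurable X) {c : ℝ≥0}
    (h : ∀ t t', X t - X t' ≤ c) :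
    HasSubgaussianMGF (fun t => X t - ∫ t', X t' ∂ν) (c ^ 2) ν := by
  obtain ⟨t₀⟩ := nonempty_of_isProbabilityMeasure ν
  have hmem : ∀ t, X t ∈ Set.Icc (X t₀ - c) (X t₀ + c) := fun t => by
    constructor <;> linarith [h t t₀, h t₀ t]
  convert hasSubgaussianMGF_of_mem_Icc (μ := ν) hX.aemeasurable (ae_of_all _ hmem) using 1
  ext
  simp [abs_of_nonneg]

lemma HasSubgaussianMGF.prod_of_fiber {g : α × β → ℝ} {K : ℝ≥0}
    (hK : HasSubgaussianMGF (fun y => ∫ t, g (t, y) ∂ν - ∫ y', ∫ t, g (t, y') ∂ν ∂ρ) K ρ)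
    (hg : Measurable g) {a b : ℝ} (hab : ∀ p, g p ∈ Set.Icc a b) {c : ℝ≥0}
    (hfiber : ∀ t t' y, g (t, y) - g (t', y) ≤ c) :
    HasSubgaussianMGF (fun p => g p - ∫ p', g p' ∂(ν.prod ρ)) (c ^ 2 + K) (ν.prod ρ) := by
  set F := fun y => ∫ t, g (t, y) ∂ν
  rw [integral_prod_symm g (Integrable.of_mem_Icc a b hg.aemeasurable (ae_of_all _ hab))]
  set M := ∫ y, F y ∂ρ
  have hint (l : ℝ) : Integrable (fun p => Real.exp (l * (g p - M))) (ν.prod ρ) :=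
    integrable_exp_mul_of_mem_Icc (a := a - M) (b := b - M) (hg.sub_const M).aemeasurable
      (ae_of_all _ fun p => ⟨by linarith [(hab p).1], by linarith [(hab p).2]⟩)
  refine ⟨hint, fun l => ?_⟩
  have hfib (y : β) : mgf (fun t => g (t, y) - F y) ν l ≤ Real.exp (c ^ 2 * l ^ 2 / 2) := by
    exact_mod_cast ((hasSubgaussianMGF_of_sub_le (hg.comp measurable_prodMk_right)
      fun t t' => hfiber t t' y).mgf_le l)
  calc mgf (fun p => g p - M) (ν.prod ρ) l
      = ∫ y, mgf (fun t => g (t, y) - F y) ν l * Real.exp (l * (F y - M)) ∂ρ := by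
        rw [mgf, integral_prod_symm _ (hint l)]
        congr with y
        rw [mgf, ← integral_mul_const]
        congr with t
        rw [← Real.exp_add]
        ring_nf
    _ ≤ ∫ y, Real.exp (c ^ 2 * l ^ 2 / 2) * Real.exp (l * (F y - M)) ∂ρ :=
        integral_mono_of_nonneg (ae_of_all _ fun y => mul_nonneg mgf_nonneg (Real.exp_pos _).le)
          ((hK.integrable_exp_mul l).const_mul _)
          (ae_of_all _ fun y => mul_le_mul_of_nonneg_right (hfib y) (Real.exp_pos _).le)
    _ = Real.exp (c ^ 2 * l ^ 2 / 2) * mgf (fun y => F y - M) ρ l := integral_const_mul _ _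
    _ ≤ Real.exp (c ^ 2 * l ^ 2 / 2) * Real.exp (K * l ^ 2 / 2) := by
        gcongr
        exact hK.mgf_le l
    _ = Real.exp (↑(c ^ 2 + K) * l ^ 2 / 2) := by
        rw [← Real.exp_add]
        push_cast
        ring_nf

end ProbabilityTheory

universe u

theorem HasBoundedDifferences.hasSubgaussianMGF_pi {N : ℕ} {Λ : Fin N → Type u}
    [∀ i, MeasurableSpace (Λ i)] [∀ i, DecidableEq (Λ i)] (ν : ∀ i, Measure (Λ i))
    [∀ i, IsProbabilityMeasure (ν i)] {f : (∀ i, Λ i) → ℝ} {c : Fin N → ℝ≥0}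
    (hf : Measurable f) (hbd : HasBoundedDifferences f c) :
    HasSubgaussianMGF (fun x => f x - ∫ x', f x' ∂Measure.pi ν) (∑ i, c i ^ 2)
      (Measure.pi ν) := by
  induction N with
  | zero =>
    have hconst : ∀ x, f x - ∫ x', f x' ∂Measure.pi ν = 0 := fun x => by
      simp [Subsingleton.elim _ x]
    simp [hconst]
  | succ n ih =>
    let e := MeasurableEquiv.piFinSuccAbove Λ 0
    have he := measurePreserving_piFinSuccAbove ν 0
    let g : Λ 0 × (∀ j, Λ (Fin.succAbove 0 j)) → ℝ := fun p => f (e.symm p)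
    have hg : Measurable g := hf.comp e.symm.measurable
    obtain ⟨x₀⟩ := nonempty_of_isProbabilityMeasure (Measure.pi ν)
    have hF := ih (fun j => ν (Fin.succAbove 0 j))
      (hg.stronglyMeasurable.integral_prod_left' (μ := ν 0)).measurable
      (HasBoundedDifferences.integral (fun t => hbd.insertNth 0 t)
        fun y => Integrable.of_mem_Icc _ _ (hg.comp measurable_prodMk_right).aemeasurable
          (ae_of_all _ fun t => hbd.mem_Icc x₀ _))
    have hprod := hF.prod_of_fiber hg (fun p => hbd.mem_Icc x₀ _)
      fun t t' y => hbd.insertNth_sub_insertNth_le 0 t t' y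
    rw [← he.integral_comp', ← he.map_eq] at hprod
    rw [Fin.sum_univ_succAbove _ 0]
    simpa only [g, e, Function.comp_def, MeasurableEquiv.symm_apply_apply] using
      hprod.of_map e.measurable.aemeasurable

theorem mcdiarmid_mgf_general {Ω : Type*} [MeasurableSpace Ω] (μ : Measure Ω)
    [IsProbabilityMeasure μ] {N : ℕ} {Λ : Fin N → Type*}
    [∀ i, MeasurableSpace (Λ i)] [∀ i, DecidableEq (Λ i)]
    (X : ∀ i, Ω → Λ i) (hXmeas : ∀ i, Measurable (X i))
    (hXindep : iIndepFun X μ)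
    (f : (∀ i, Λ i) → ℝ) (hf : Measurable f)
    (c : Fin N → ℝ) (hc : ∀ i, 0 ≤ c i)
    (hbd : ∀ x y : ∀ i, Λ i, f x - f y ≤ ∑ i, if x i ≠ y i then c i else 0)
    (l : ℝ) :
    ∫ ω, Real.exp (l * (f (fun i => X i ω) - ∫ ω', f (fun i => X i ω') ∂μ)) ∂μ ≤
      Real.exp (l ^ 2 * (∑ i, c i ^ 2) / 2) := by
  have hX : Measurable fun ω i => X i ω := measurable_pi_lambda _ hXmeas
  have : ∀ i, IsProbabilityMeasure (μ.map (X i)) := fun i =>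
    Measure.isProbabilityMeasure_map (hXmeas i).aemeasurable
  have hsub := HasBoundedDifferences.hasSubgaussianMGF_pi (fun i => μ.map (X i)) hf
    (c := fun i => (c i).toNNReal) fun x y => by simpa [Real.coe_toNNReal _ (hc _)] using hbd x y
  rw [← hXindep.map_fun_eq_pi_map fun i => (hXmeas i).aemeasurable,
    integral_map hX.aemeasurable hf.aestronglyMeasurable] at hsub
  refine ((hsub.of_map hX.aemeasurable).mgf_le l).trans_eq ?_
  push_cast [Real.coe_toNNReal _ (hc _)]
  ring_nf

/-- McDiarmid moment-generating-function bound for independent random variables: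
if `X₁, …, X_N` are independent with `Xᵢ` valued in `Λᵢ`, and `f` satisfies the bounded
differences condition `f(x) − f(y) ≤ ∑ᵢ cᵢ·1{xᵢ ≠ yᵢ}`, then for any `λ ∈ ℝ`,
`E[exp(λ(f(X) − E[f(X)]))] ≤ exp(λ²‖c‖₂²/2)`. -/
theorem mcdiarmid_mgf {Ω : Type*} [MeasurableSpace Ω] (μ : Measure Ω)
    [IsProbabilityMeasure μ] {N : ℕ} {Λ : Fin N → Type*}
    [∀ i, MeasurableSpace (Λ i)] [∀ i, DecidableEq (Λ i)]
    (X : ∀ i, Ω → Λ i) (hXmeas : ∀ i, Measurable (X i))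
    (hXindep : iIndepFun X μ)
    (f : (∀ i, Λ i) → ℝ) (hf : Measurable f)
    (c : Fin N → ℝ) (hc : ∀ i, 0 ≤ c i)
    (hbd : ∀ x y : ∀ i, Λ i, f x - f y ≤ ∑ i, if x i ≠ y i then c i else 0)
    (hint : Integrable (fun ω => f (fun i => X i ω)) μ) (l : ℝ) :
    ∫ ω, Real.exp (l * (f (fun i => X i ω) - ∫ ω', f (fun i => X i ω') ∂μ)) ∂μ ≤
      Real.exp (l ^ 2 * (∑ i, c i ^ 2) / 2) :=
  mcdiarmid_mgf_general μ X hXmeas hXindep f hf c hc hbd l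
end
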